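/- arXiv:2304.01421 — 2 statements merged into one kernel-verified Lean document; each statement's English description precedes it below -/
import Mathlib

section
/- Let Λ be a commutative ring equipped with a ring endomorphism ψ and an ideal I ⊆ Λ with a finite filtration I = F¹ ⊇ F² ⊇ ⋯ ⊇ F^N = 0 by ideals preserved by ψ, such that ψ acts on F^n/F^{n+1} as multiplication by ℓ^n for a fixed integer ℓ ≥ 2. Then for every x ∈ I there exists i ∈ ℕ with ψ^i(x) ∈ ℓ·I, and every ℓ-torsion element of I is killed by some power of ψ. -/
open TensorProduct

noncomputable section

/-- `ℤ[1/ℓ]`. -/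
abbrev Zloc (ℓ : ℤ) : Type := Localization.Away ℓ

/-- `A[1/ℓ] = ℤ[1/ℓ] ⊗_ℤ A`. -/
abbrev loc (ℓ : ℤ) (A : Type) [AddCommGroup A] : Type := Zloc ℓ ⊗[ℤ] A

/-- The map `A → A[1/ℓ]`, `a ↦ 1 ⊗ a`. -/
def toLoc (ℓ : ℤ) (A : Type) [AddCommGroup A] : A →+ loc ℓ A :=
  ((TensorProduct.mk ℤ (Zloc ℓ) A) 1).toAddMonoidHom

/-- The induced endomorphism `θ[1/ℓ]` of `A[1/ℓ]`. -/
def locMap (ℓ : ℤ) {A : Type} [AddCommGroup A] (θ : A →+ A) : loc ℓ A →+ loc ℓ A :=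
  (LinearMap.lTensor (Zloc ℓ) θ.toIntLinearMap).toAddMonoidHom

/-- The sequential colimit of `A → A → A → ⋯` along `θ`. -/
abbrev seqColim {A : Type} [AddCommGroup A] (θ : A →+ A) : Type :=
  AddCommGroup.DirectLimit (fun _ : ℕ => A)
    (fun i j _ => (show AddMonoid.End A from θ) ^ (j - i))

instance seqColim.instAddCommGroup {A : Type} [AddCommGroup A] (θ : A →+ A) :
    AddCommGroup (seqColim θ) :=
  AddCommGroup.DirectLimit.addCommGroup _ _

/-- The canonical map `A → colim_θ A` (at stage 0). -/
def seqColimOf {A : Type} [AddCommGroup A] (θ : A →+ A) : A →+ seqColim θ :=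
  AddCommGroup.DirectLimit.of (fun _ : ℕ => A)
    (fun i j _ => (show AddMonoid.End A from θ) ^ (j - i)) 0

/-! Writing `ψ x = ℓ ^ n • x + z` with `z ∈ F (n + 1)` for `x ∈ F n`, one gets
`ψ^[k+1] x = ℓ ^ n • ψ^[k] x + ψ^[k] z`, and induction on the number of steps left before
the filtration reaches `F N = 0` shows that `ψ^[k] x ∈ ℓ ^ n • F n` once `n + k ≥ N`.
The same recursion shows that an element of `F n` killed by a divisor of `ℓ ^ n` is killed
by `ψ^[k]`: the first term vanishes, and `z` is again killed by that divisor. -/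

section GradedEigen

variable {M G : Type*} [AddCommGroup M] [FunLike G M M] [AddMonoidHomClass G M M]
  {f : G} {ℓ : ℤ} {F : ℕ → AddSubgroup M} {N : ℕ}

theorem iterate_succ_apply_eq_zsmul_add (f : G) (c : ℤ) (k : ℕ) (x : M) :
    f^[k + 1] x = c • f^[k] x + f^[k] (f x - c • x) := by
  rw [iterate_map_sub, iterate_map_zsmul, Function.iterate_succ_apply, add_sub_cancel]

theorem eq_zero_of_mem_of_le (hF : Antitone F) (hN : F N = ⊥) {n : ℕ} (hn : N ≤ n) {x : M}
    (hx : x ∈ F n) : x = 0 := by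
  simpa [hN] using hF hn hx

theorem exists_iterate_eq_zsmul_pow (hF : Antitone F) (hN : F N = ⊥)
    (hstab : ∀ n, Set.MapsTo f (F n) (F n))
    (hgr : ∀ n, ∀ x ∈ F n, f x - ℓ ^ n • x ∈ F (n + 1)) {k n : ℕ} (hk : N ≤ n + k) {x : M}
    (hx : x ∈ F n) : ∃ y ∈ F n, f^[k] x = ℓ ^ n • y := by
  induction k generalizing n x with
  | zero => exact ⟨0, zero_mem _, by simp [eq_zero_of_mem_of_le hF hN hk hx]⟩
  | succ k ih =>
    obtain ⟨y, hy, hfy⟩ := ih (by omega) (hgr n x hx)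
    refine ⟨f^[k] x + ℓ • y, add_mem ((hstab n).iterate k hx) (zsmul_mem (hF n.le_succ hy) ℓ), ?_⟩
    rw [iterate_succ_apply_eq_zsmul_add f (ℓ ^ n), hfy, smul_add, smul_smul, ← pow_succ]

theorem iterate_eq_zero_of_zsmul_eq_zero (hF : Antitone F) (hN : F N = ⊥)
    (hgr : ∀ n, ∀ x ∈ F n, f x - ℓ ^ n • x ∈ F (n + 1)) {c : ℤ} {k n : ℕ} (hk : N ≤ n + k)
    (hc : c ∣ ℓ ^ n) {x : M} (hx : x ∈ F n) (hcx : c • x = 0) : f^[k] x = 0 := by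
  induction k generalizing n x with
  | zero => exact eq_zero_of_mem_of_le hF hN hk hx
  | succ k ih =>
    have hℓx : ℓ ^ n • x = 0 := by
      obtain ⟨d, hd⟩ := hc
      rw [hd, mul_comm, mul_smul, hcx, smul_zero]
    have hcz : c • (f x - ℓ ^ n • x) = 0 := by
      rw [hℓx, sub_zero, ← map_zsmul, hcx, map_zero]
    rw [iterate_succ_apply_eq_zsmul_add f (ℓ ^ n),
      ih (by omega) (hc.trans (pow_dvd_pow ℓ n.le_succ)) (hgr n x hx) hcz, ← iterate_map_zsmul,
      hℓx, iterate_map_zero, add_zero]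

end GradedEigen

theorem adams_ideal_conditions_general {Λ : Type} [CommRing Λ] (ℓ : ℤ)
    (ψ : Λ →+* Λ) (I : Ideal Λ) (N : ℕ) (F : ℕ → Ideal Λ)
    (hF1 : F 1 = I) (hFN : F N = ⊥)
    (hanti : ∀ n, F (n + 1) ≤ F n)
    (hstab : ∀ n, ∀ x ∈ F n, ψ x ∈ F n)
    (hgr : ∀ n, ∀ x ∈ F n, ψ x - ℓ ^ n • x ∈ F (n + 1)) :
    (∀ x ∈ I, ∃ i : ℕ, ∃ y ∈ I, (⇑ψ)^[i] x = ℓ • y)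
      ∧ (∀ x ∈ I, ℓ • x = 0 → ∃ i : ℕ, (⇑ψ)^[i] x = 0) := by
  subst hF1
  have hF : Antitone fun n => (F n).toAddSubgroup :=
    antitone_nat_of_succ_le fun n => Submodule.toAddSubgroup_mono (hanti n)
  have hN : (F N).toAddSubgroup = ⊥ := by rw [hFN, Submodule.bot_toAddSubgroup]
  refine ⟨fun x hx => ?_, fun x hx hℓx => ⟨N, ?_⟩⟩
  · obtain ⟨y, hy, hψy⟩ := exists_iterate_eq_zsmul_pow (f := ψ) hF hN (fun n x hx => hstab n x hx)
      hgr (k := N) (by omega) hx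
    exact ⟨N, y, hy, by rwa [pow_one] at hψy⟩
  · exact iterate_eq_zero_of_zsmul_eq_zero (f := ψ) hF hN hgr (k := N) (by omega)
      (pow_one ℓ).symm.dvd hx hℓx

/-- Combinatorial core of Proposition 2.4: for an ideal `I` of a commutative ring with a
finite `ψ`-stable filtration on which `ψ` acts as `ℓ^n` on the graded pieces, every
element of `I` is eventually sent into `ℓ·I`, and every `ℓ`-torsion element of `I` is
killed by some power of `ψ`. -/
theorem adams_ideal_conditions {Λ : Type} [CommRing Λ] (ℓ : ℤ) (hℓ : 2 ≤ ℓ)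
    (ψ : Λ →+* Λ) (I : Ideal Λ) (N : ℕ) (F : ℕ → Ideal Λ)
    (hF1 : F 1 = I) (hFN : F N = ⊥)
    (hanti : ∀ n, F (n + 1) ≤ F n)
    (hstab : ∀ n, ∀ x ∈ F n, ψ x ∈ F n)
    (hgr : ∀ n, ∀ x ∈ F n, ψ x - ℓ ^ n • x ∈ F (n + 1)) :
    (∀ x ∈ I, ∃ i : ℕ, ∃ y ∈ I, (⇑ψ)^[i] x = ℓ • y)
      ∧ (∀ x ∈ I, ℓ • x = 0 → ∃ i : ℕ, (⇑ψ)^[i] x = 0) :=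
  adams_ideal_conditions_general ℓ ψ I N F hF1 hFN hanti hstab hgr
end
end

section
/- Let Λ be a commutative ring with endomorphism ψ and ideal I with finite ψ-stable filtration F¹ = I ⊇ ⋯ ⊇ F^N = 0 such that ψ ≡ ℓ^n on F^n/F^{n+1} (ℓ ≥ 2). Then the endomorphism induced by ψ on I[1/ℓ] = ℤ[1/ℓ] ⊗ I is bijective. -/
open TensorProduct

noncomputable section

/-!
Since `ψ - ℓⁿ` maps `Fⁿ` into `Fⁿ⁺¹`, the polynomial `p = ∏_{n=1}^{N} (X - ℓⁿ)` kills `ψ` on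
`I = F¹`. Its constant term `±∏ ℓⁿ` becomes a unit in `ℤ[1/ℓ]`, so after base change `ψ`
satisfies a polynomial with invertible constant term and is therefore invertible, with an
inverse that is a polynomial in `ψ`.
-/

open Polynomial Finset

theorem Polynomial.aeval_prod_X_sub_C_apply_mem {R M : Type*} [CommRing R] [AddCommGroup M]
    [Module R M] (φ : Module.End R M) (G : ℕ → Set M) (c : ℕ → R)
    (hG : ∀ n, ∀ x ∈ G n, φ x - c n • x ∈ G (n + 1)) (k : ℕ) {x : M} (hx : x ∈ G 0) :
    aeval φ (∏ n ∈ range k, (X - C (c n))) x ∈ G k := by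
  induction k with
  | zero => simpa using hx
  | succ k ih =>
    rw [prod_range_succ, mul_comm, map_mul, Module.End.mul_apply]
    simpa using hG k _ ih

theorem Polynomial.isUnit_of_aeval_eq_zero {R A : Type*} [CommRing R] [Ring A] [Algebra R A]
    {a : A} {p : R[X]} (hp : aeval a p = 0) (h0 : IsUnit (algebraMap R A (p.coeff 0))) :
    IsUnit a := by
  have hdecomp : -aeval a p.divX * a = algebraMap R A (p.coeff 0) := by
    have := congrArg (aeval a) (divX_mul_X_add p)
    rw [map_add, map_mul, aeval_X, aeval_C, hp] at this
    rw [neg_mul, neg_eq_iff_add_eq_zero, this]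
  have hcomm : aeval a p.divX * a = a * aeval a p.divX := by
    simpa only [map_mul, aeval_X] using congrArg (aeval a) (mul_comm p.divX X)
  rw [← hdecomp] at h0
  exact ((Commute.neg_left hcomm).isUnit_mul_iff.mp h0).2

theorem Polynomial.isUnit_algebraMap_coeff_zero_prod_X_sub_C {R S : Type*} [CommRing R]
    [CommRing S] [Algebra R S] (s : Finset ℕ) (c : ℕ → R)
    (hc : ∀ n ∈ s, IsUnit (algebraMap R S (c n))) :
    IsUnit (algebraMap R S ((∏ n ∈ s, (X - C (c n))).coeff 0)) := by
  rw [coeff_zero_eq_eval_zero, eval_prod, map_prod]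
  exact IsUnit.prod_iff.mpr fun n hn => by simpa using (hc n hn).neg

theorem adams_loc_bijective_general {Λ : Type} [CommRing Λ] (ℓ : ℤ)
    (ψ : Λ →+* Λ) (I : Ideal Λ) (N : ℕ) (F : ℕ → Ideal Λ)
    (hF1 : F 1 = I) (hFN : F N = ⊥)
    (hanti : ∀ n, F (n + 1) ≤ F n)
    (hgr : ∀ n, ∀ x ∈ F n, ψ x - ℓ ^ n • x ∈ F (n + 1))
    (ψ' : I →+ I) (hψ' : ∀ x : I, (ψ' x : Λ) = ψ x) :
    Function.Bijective (locMap ℓ ψ') := by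
  set φ : Module.End ℤ I := ψ'.toIntLinearMap
  set p : ℤ[X] := ∏ n ∈ range N, (X - C (ℓ ^ (n + 1)))
  have hpφ : aeval φ p = 0 := by
    ext x
    have hmem := aeval_prod_X_sub_C_apply_mem φ (fun n => {y : I | (y : Λ) ∈ F (n + 1)})
      (fun n => ℓ ^ (n + 1)) (fun n y hy => by simpa [φ, hψ'] using hgr (n + 1) _ hy) N
      (x := x) (by simp [hF1])
    have hzero := hanti N hmem
    rwa [hFN, Ideal.mem_bot] at hzero
  set Φ := Module.End.lTensorAlgHom ℤ I (Zloc ℓ) φ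
  have hpΦ : aeval Φ p = 0 := by rw [aeval_algHom_apply, hpφ, map_zero]
  have hcoeff : IsUnit (algebraMap ℤ (Module.End ℤ (loc ℓ I)) (p.coeff 0)) := by
    have hloc : IsUnit (algebraMap ℤ (Zloc ℓ) (p.coeff 0)) :=
      isUnit_algebraMap_coeff_zero_prod_X_sub_C _ _ fun n _ => by
        simpa using (IsLocalization.Away.algebraMap_isUnit (S := Zloc ℓ) ℓ).pow (n + 1)
    -- ring homs out of `ℤ` are unique, so `ℤ` acts on `I[1/ℓ]` through `ℤ[1/ℓ]`
    rw [RingHom.ext_int (algebraMap ℤ _)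
      ((Module.toModuleEnd ℤ (loc ℓ I)).comp (algebraMap ℤ (Zloc ℓ)))]
    exact hloc.map (Module.toModuleEnd ℤ (loc ℓ I))
  exact (Module.End.isUnit_iff Φ).mp (isUnit_of_aeval_eq_zero hpΦ hcoeff)

/-- With the setup of Proposition 2.4 for an ideal `I` with finite `ψ`-stable filtration
(`ψ ≡ ℓ^n` on `Fⁿ/Fⁿ⁺¹`, `ℓ ≥ 2`), the endomorphism induced by `ψ` on
`I[1/ℓ] = ℤ[1/ℓ] ⊗ I` is bijective. -/
theorem adams_loc_bijective {Λ : Type} [CommRing Λ] (ℓ : ℤ) (hℓ : 2 ≤ ℓ)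
    (ψ : Λ →+* Λ) (I : Ideal Λ) (N : ℕ) (F : ℕ → Ideal Λ)
    (hF1 : F 1 = I) (hFN : F N = ⊥)
    (hanti : ∀ n, F (n + 1) ≤ F n)
    (hstab : ∀ n, ∀ x ∈ F n, ψ x ∈ F n)
    (hgr : ∀ n, ∀ x ∈ F n, ψ x - ℓ ^ n • x ∈ F (n + 1))
    (ψ' : I →+ I) (hψ' : ∀ x : I, (ψ' x : Λ) = ψ x) :
    Function.Bijective (locMap ℓ ψ') :=
  adams_loc_bijective_general ℓ ψ I N F hF1 hFN hanti hgr ψ' hψ'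
end
end
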